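/- For positive integers j, k and integers a, b with 1 ≤ b ≤ a and 2b ≥ a, one has the factorization j^a·k + j·k^a - j^b·k^{a-b+1} - j^{a-b+1}·k^b = j·k·(j-k)^2 · S, where S is a non-negative integer (a sum of monomials j^p k^q with non-negative integer coefficients), and in particular the left-hand side is divisible by j·k·(j-k)^2. -/

import Mathlib

/-!
With `b = p + 1` and `a = p + 1 + q`, the expression is `j·k·(j^p - k^p)·(j^q - k^q)`, and each
difference of powers is `j - k` times a geometric sum `∑ j^i k^(n-1-i)` of nonnegative terms.
-/

theorem mul_mul_pow_sub_pow_mul_pow_sub_pow {R : Type*} [CommRing R] (x y : R) (p q : ℕ) :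
    x * y * (x ^ p - y ^ p) * (x ^ q - y ^ q) =
      x ^ (p + 1 + q) * y + x * y ^ (p + 1 + q) - x ^ (p + 1) * y ^ (q + 1)
        - x ^ (q + 1) * y ^ (p + 1) := by
  ring

theorem exists_nonneg_pow_sub_pow_eq_sub_mul {R : Type*} [CommRing R] [PartialOrder R]
    [IsOrderedRing R] {x y : R} (hx : 0 ≤ x) (hy : 0 ≤ y) (n : ℕ) :
    ∃ S : R, 0 ≤ S ∧ x ^ n - y ^ n = (x - y) * S :=
  ⟨∑ i ∈ Finset.range n, x ^ i * y ^ (n - 1 - i),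
    Finset.sum_nonneg fun _ _ => by positivity, by rw [← geom_sum₂_mul, mul_comm]⟩

theorem power_sum_factorization_general (j k : ℤ) (hj : 0 < j) (hk : 0 < k)
    (a b : ℕ) (hb : 1 ≤ b) (hba : b ≤ a) :
    ∃ S : ℤ, 0 ≤ S ∧
      j ^ a * k + j * k ^ a - j ^ b * k ^ (a - b + 1) - j ^ (a - b + 1) * k ^ b
        = j * k * (j - k) ^ 2 * S := by
  obtain ⟨p, rfl⟩ : ∃ p, b = p + 1 := ⟨b - 1, by omega⟩
  obtain ⟨q, rfl⟩ : ∃ q, a = p + 1 + q := ⟨a - (p + 1), by omega⟩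
  rw [show p + 1 + q - (p + 1) = q by omega, ← mul_mul_pow_sub_pow_mul_pow_sub_pow]
  obtain ⟨S, hS, hpow_p⟩ := exists_nonneg_pow_sub_pow_eq_sub_mul hj.le hk.le p
  obtain ⟨T, hT, hpow_q⟩ := exists_nonneg_pow_sub_pow_eq_sub_mul hj.le hk.le q
  exact ⟨S * T, mul_nonneg hS hT, by rw [hpow_p, hpow_q]; ring⟩

/-- For positive integers `j`, `k` and integers `1 ≤ b ≤ a ≤ 2b`, the expression
`j^a·k + j·k^a - j^b·k^(a-b+1) - j^(a-b+1)·k^b` factors as `j·k·(j-k)^2·S` with `S ≥ 0`;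
in particular it is divisible by `j·k·(j-k)^2`. -/
theorem power_sum_factorization (j k : ℤ) (hj : 0 < j) (hk : 0 < k)
    (a b : ℕ) (hb : 1 ≤ b) (hba : b ≤ a) (hab : a ≤ 2 * b) :
    ∃ S : ℤ, 0 ≤ S ∧
      j ^ a * k + j * k ^ a - j ^ b * k ^ (a - b + 1) - j ^ (a - b + 1) * k ^ b
        = j * k * (j - k) ^ 2 * S :=
  power_sum_factorization_general j k hj hk a b hb hba
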